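/- Let F : ℝ^d → ℝ satisfy Assumption (A) with constants L, C_u, C_l, M, and let α > 0. Then there exist constants c₁, c₂ > 0, depending only on α, M, C_u and C_l, such that for every Borel probability measure ρ on ℝ^d with finite fourth moment, ∫_{ℝ^d} |X^α(ρ) − x|⁴ ρ(dx) ≤ c₁ + c₂ ∫_{ℝ^d} |x|⁴ ρ(dx). -/

import Mathlib

open MeasureTheory Filter

/-- Assumption (A) on the cost function `F` with constants `L, Cu, Cl, M`. -/
def AssumptionA {d : ℕ} (F : EuclideanSpace ℝ (Fin d) → ℝ) (L Cu Cl M : ℝ) : Prop :=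
  (∀ x y, |F x - F y| ≤ L * (‖x‖ + ‖y‖) * ‖x - y‖) ∧
  BddBelow (Set.range F) ∧
  (∀ x, F x - sInf (Set.range F) ≤ Cu * (1 + ‖x‖ ^ 2)) ∧
  (∀ x, M ≤ ‖x‖ → Cl * ‖x‖ ^ 2 ≤ F x - sInf (Set.range F))

/-- The regularized global best `X^α(μ) = (∫ x e^{-αF(x)} dμ)/(∫ e^{-αF(x)} dμ)`. -/
noncomputable def Xalpha {d : ℕ} (α : ℝ) (F : EuclideanSpace ℝ (Fin d) → ℝ)
    (μ : Measure (EuclideanSpace ℝ (Fin d))) : EuclideanSpace ℝ (Fin d) :=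
  (∫ x, Real.exp (-α * F x) ∂μ)⁻¹ • ∫ x, Real.exp (-α * F x) • x ∂μ

/-!
Write `c = inf F` and `m₂ = ∫ ‖x‖² dμ`. By Jensen's inequality for `exp` and the quadratic upper
bound on `F - c`, the normalising integral `∫ e^{-αF} dμ` is at least `δ = e^{-α(c + C_u(1 + m₂))}`.
Outside a ball of radius `R ≥ M` with `C_l R² ≥ 2 C_u (1 + m₂)` the quadratic lower bound gives
`e^{-αF(x)} ‖x‖ ≤ e^{-αc} ‖x‖ e^{-α C_l ‖x‖²} ≤ K δ` with `K = 1 + 2/(α C_l)`, so pointwise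
`e^{-αF(x)} ‖x‖ ≤ R e^{-αF(x)} + K δ`, and integrating yields `‖X^α(μ)‖ ≤ R + K`. Taking
`R² = max(M², 2 (C_u/C_l)(1 + m₂))` gives `‖X^α(μ)‖² ≤ b₁ + b₂ m₂`, and `m₂² ≤ ∫ ‖x‖⁴ dμ`
turns this into the fourth-moment bound.
-/

open Real

lemma continuous_of_abs_sub_le {E : Type*} [SeminormedAddCommGroup E] {F : E → ℝ} {L : ℝ}
    (hF : ∀ x y, |F x - F y| ≤ L * (‖x‖ + ‖y‖) * ‖x - y‖) : Continuous F := by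
  refine continuous_iff_continuousAt.2 fun x => tendsto_iff_dist_tendsto_zero.2 ?_
  have hbound : Continuous fun y => L * (‖y‖ + ‖x‖) * ‖y - x‖ := by fun_prop
  refine squeeze_zero (fun _ => dist_nonneg) (fun y => (hF y x).trans_eq' (Real.dist_eq _ _)) ?_
  simpa using hbound.tendsto x

section Jensen

variable {X : Type*} [MeasurableSpace X] {μ : Measure X} [IsProbabilityMeasure μ] {g : X → ℝ}

lemma exp_integral_le_integral_exp (hg : Integrable g μ)
    (hexp : Integrable (fun x => exp (g x)) μ) :
    exp (∫ x, g x ∂μ) ≤ ∫ x, exp (g x) ∂μ :=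
  convexOn_exp.map_integral_le continuous_exp.continuousOn isClosed_univ
    (ae_of_all _ fun _ => Set.mem_univ _) hg hexp

lemma sq_integral_le_integral_sq (hg : Integrable g μ) (hg2 : Integrable (fun x => g x ^ 2) μ) :
    (∫ x, g x ∂μ) ^ 2 ≤ ∫ x, g x ^ 2 ∂μ :=
  (even_two.convexOn_pow (𝕜 := ℝ)).map_integral_le (continuous_pow 2).continuousOn isClosed_univ
    (ae_of_all _ fun _ => Set.mem_univ _) hg hg2

end Jensen

lemma integral_norm_sub_pow_four_le {E : Type*} [NormedAddCommGroup E] [MeasurableSpace E]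
    [OpensMeasurableSpace E] {μ : Measure E} [IsProbabilityMeasure μ]
    (h4 : Integrable (fun x => ‖x‖ ^ 4) μ) (a : E) :
    ∫ x, ‖a - x‖ ^ 4 ∂μ ≤ 8 * ‖a‖ ^ 4 + 8 * ∫ x, ‖x‖ ^ 4 ∂μ := by
  have hpt : ∀ x : E, ‖a - x‖ ^ 4 ≤ 8 * ‖a‖ ^ 4 + 8 * ‖x‖ ^ 4 := fun x => by
    have := pow_le_pow_left₀ (norm_nonneg _) (norm_sub_le a x) 4
    nlinarith [sq_nonneg (‖a‖ - ‖x‖), sq_nonneg (‖a‖ + ‖x‖), sq_nonneg (‖a‖ ^ 2 - ‖x‖ ^ 2),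
      norm_nonneg a, norm_nonneg x, mul_nonneg (norm_nonneg a) (norm_nonneg x)]
  have hrhs : Integrable (fun x : E => 8 * ‖a‖ ^ 4 + 8 * ‖x‖ ^ 4) μ :=
    (integrable_const _).add (h4.const_mul 8)
  have hlhs : Integrable (fun x : E => ‖a - x‖ ^ 4) μ :=
    hrhs.mono' (by fun_prop : Continuous fun x : E => ‖a - x‖ ^ 4).aestronglyMeasurable
      (ae_of_all _ fun x => by rw [Real.norm_of_nonneg (by positivity)]; exact hpt x)
  calc ∫ x, ‖a - x‖ ^ 4 ∂μ ≤ ∫ x, (8 * ‖a‖ ^ 4 + 8 * ‖x‖ ^ 4) ∂μ := integral_mono hlhs hrhs hpt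
    _ = 8 * ‖a‖ ^ 4 + 8 * ∫ x, ‖x‖ ^ 4 ∂μ := by
      rw [integral_add (integrable_const _) (h4.const_mul 8), integral_const, integral_const_mul,
        probReal_univ, one_smul]

lemma norm_inv_integral_smul_integral_le {X E : Type*} [MeasurableSpace X]
    [NormedAddCommGroup E] [NormedSpace ℝ E] {μ : Measure X} [IsProbabilityMeasure μ]
    {w : X → ℝ} {f : X → E} {R K δ : ℝ} (hw : Integrable w μ) (hw0 : ∀ x, 0 ≤ w x)
    (hK : 0 ≤ K) (hδ : 0 < δ) (hδw : δ ≤ ∫ x, w x ∂μ)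
    (hbound : ∀ x, w x * ‖f x‖ ≤ R * w x + K * δ) :
    ‖(∫ x, w x ∂μ)⁻¹ • ∫ x, w x • f x ∂μ‖ ≤ R + K := by
  have hD : 0 < ∫ x, w x ∂μ := hδ.trans_le hδw
  have hnum : ‖∫ x, w x • f x ∂μ‖ ≤ R * ∫ x, w x ∂μ + K * δ := by
    refine (norm_integral_le_of_norm_le (g := fun x => R * w x + K * δ)
      ((hw.const_mul R).add (integrable_const _)) (ae_of_all _ fun x => ?_)).trans_eq ?_
    · rw [norm_smul, Real.norm_of_nonneg (hw0 x)]; exact hbound x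
    · rw [integral_add (hw.const_mul R) (integrable_const _), integral_const_mul, integral_const,
        probReal_univ, one_smul]
  rw [norm_smul, Real.norm_of_nonneg (inv_nonneg.2 hD.le), inv_mul_le_iff₀ hD]
  nlinarith [mul_le_mul_of_nonneg_left hδw hK]

lemma mul_exp_neg_mul_sq_le {t R y : ℝ} (ht : 0 < t) (hR : 0 ≤ R) (hRy : R ≤ y) :
    y * exp (-(t * y ^ 2)) ≤ (1 + 2 / t) * exp (-(t * R ^ 2 / 2)) := by
  have hy : y ≤ (1 + 2 / t) * exp (t * y ^ 2 / 2) := by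
    have h1 : y ≤ (1 + 2 / t) * (1 + t * y ^ 2 / 2) := by
      have : (1 + 2 / t) * (1 + t * y ^ 2 / 2) = 1 + y ^ 2 + 2 / t + t * y ^ 2 / 2 := by
        field_simp; ring
      rw [this]
      nlinarith [sq_nonneg (y - 1 / 2), div_pos two_pos ht, sq_nonneg y]
    refine h1.trans (mul_le_mul_of_nonneg_left ?_ (by positivity))
    linarith [add_one_le_exp (t * y ^ 2 / 2)]
  have hsq : R ^ 2 ≤ y ^ 2 := pow_le_pow_left₀ hR hRy 2
  calc y * exp (-(t * y ^ 2)) ≤ (1 + 2 / t) * exp (t * y ^ 2 / 2) * exp (-(t * y ^ 2)) :=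
        mul_le_mul_of_nonneg_right hy (exp_pos _).le
    _ = (1 + 2 / t) * exp (-(t * y ^ 2 / 2)) := by
        rw [mul_assoc, ← exp_add]; ring_nf
    _ ≤ (1 + 2 / t) * exp (-(t * R ^ 2 / 2)) := by
        gcongr

section CostWeights

variable {E : Type*} [NormedAddCommGroup E] [MeasurableSpace E] [OpensMeasurableSpace E]
  {μ : Measure E} [IsProbabilityMeasure μ] {F : E → ℝ} {α c : ℝ}

lemma integrable_exp_neg_mul (hF : Continuous F) (hc : ∀ x, c ≤ F x) (hα : 0 ≤ α) :
    Integrable (fun x => exp (-α * F x)) μ :=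
  .of_bound (by fun_prop : Continuous fun x => exp (-α * F x)).aestronglyMeasurable
    (exp (-α * c)) (ae_of_all _ fun x => by
      rw [Real.norm_of_nonneg (exp_pos _).le, exp_le_exp]
      nlinarith [hc x])

lemma exp_le_integral_exp_neg_mul {Cu : ℝ} (hF : Continuous F) (hc : ∀ x, c ≤ F x) (hα : 0 ≤ α)
    (hup : ∀ x, F x - c ≤ Cu * (1 + ‖x‖ ^ 2)) (h2 : Integrable (fun x => ‖x‖ ^ 2) μ) :
    exp (-α * (c + Cu * (1 + ∫ x, ‖x‖ ^ 2 ∂μ))) ≤ ∫ x, exp (-α * F x) ∂μ := by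
  set g : E → ℝ := fun x => -α * (c + Cu * (1 + ‖x‖ ^ 2))
  have hgF : ∀ x, g x ≤ -α * F x := fun x => by nlinarith [hup x]
  have hquad : Integrable (fun x => Cu * (1 + ‖x‖ ^ 2)) μ :=
    ((integrable_const 1).add h2).const_mul Cu
  have hg : Integrable g μ := ((integrable_const c).add hquad).const_mul _
  have hint : ∫ x, g x ∂μ = -α * (c + Cu * (1 + ∫ x, ‖x‖ ^ 2 ∂μ)) := by
    simp only [g]
    rw [integral_const_mul, integral_add (integrable_const c) hquad, integral_const_mul,
      integral_add (integrable_const 1) h2, integral_const, integral_const, probReal_univ,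
      one_smul, one_smul]
  have hexpF := integrable_exp_neg_mul (μ := μ) hF hc hα
  have hexpg : Integrable (fun x => exp (g x)) μ :=
    hexpF.mono' (by fun_prop : Continuous fun x => exp (g x)).aestronglyMeasurable
      (ae_of_all _ fun x => by rw [Real.norm_of_nonneg (exp_pos _).le, exp_le_exp]; exact hgF x)
  calc exp (-α * (c + Cu * (1 + ∫ x, ‖x‖ ^ 2 ∂μ))) = exp (∫ x, g x ∂μ) := by rw [hint]
    _ ≤ ∫ x, exp (g x) ∂μ := exp_integral_le_integral_exp hg hexpg
    _ ≤ ∫ x, exp (-α * F x) ∂μ :=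
      integral_mono hexpg hexpF fun x => exp_le_exp.2 (hgF x)

end CostWeights

lemma exp_neg_mul_mul_norm_le {E : Type*} [SeminormedAddCommGroup E] {F : E → ℝ}
    {α c Cu Cl M R m : ℝ} (hα : 0 < α) (hCl : 0 < Cl)
    (hlow : ∀ x, M ≤ ‖x‖ → Cl * ‖x‖ ^ 2 ≤ F x - c) (hR : 0 ≤ R) (hMR : M ≤ R)
    (hR2 : 2 * Cu * (1 + m) ≤ Cl * R ^ 2) (x : E) :
    exp (-α * F x) * ‖x‖ ≤
      R * exp (-α * F x) + (1 + 2 / (α * Cl)) * exp (-α * (c + Cu * (1 + m))) := by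
  have hK : 0 ≤ (1 + 2 / (α * Cl)) * exp (-α * (c + Cu * (1 + m))) := by positivity
  rcases le_or_gt ‖x‖ R with hx | hx
  · nlinarith [exp_pos (-α * F x)]
  have hweight : exp (-α * F x) ≤ exp (-α * c) * exp (-(α * Cl * ‖x‖ ^ 2)) := by
    rw [← exp_add, exp_le_exp]
    nlinarith [hlow x (hMR.trans hx.le)]
  have htail := mul_exp_neg_mul_sq_le (mul_pos hα hCl) hR hx.le
  have hRm : exp (-(α * Cl * R ^ 2 / 2)) ≤ exp (-α * (Cu * (1 + m))) := by
    rw [exp_le_exp]; nlinarith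
  calc exp (-α * F x) * ‖x‖ ≤ exp (-α * c) * (‖x‖ * exp (-(α * Cl * ‖x‖ ^ 2))) := by
        nlinarith [norm_nonneg x]
    _ ≤ exp (-α * c) * ((1 + 2 / (α * Cl)) * exp (-α * (Cu * (1 + m)))) := by
        gcongr exp (-α * c) * ?_; exact htail.trans (by gcongr)
    _ = (1 + 2 / (α * Cl)) * exp (-α * (c + Cu * (1 + m))) := by
        rw [mul_left_comm, ← exp_add]; ring_nf
    _ ≤ _ := by nlinarith [exp_pos (-α * F x)]

section Xalpha

variable {d : ℕ} {α L Cu Cl M : ℝ} {F : EuclideanSpace ℝ (Fin d) → ℝ}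
  {μ : Measure (EuclideanSpace ℝ (Fin d))} [IsProbabilityMeasure μ]

lemma norm_Xalpha_le (hα : 0 < α) (hCl : 0 < Cl) (hF : AssumptionA F L Cu Cl M)
    (h2 : Integrable (fun x => ‖x‖ ^ 2) μ) {R : ℝ} (hR : 0 ≤ R) (hMR : M ≤ R)
    (hR2 : 2 * Cu * (1 + ∫ x, ‖x‖ ^ 2 ∂μ) ≤ Cl * R ^ 2) :
    ‖Xalpha α F μ‖ ≤ R + (1 + 2 / (α * Cl)) := by
  obtain ⟨hlip, hbdd, hup, hlow⟩ := hF
  have hc : ∀ x, sInf (Set.range F) ≤ F x := fun x => csInf_le hbdd ⟨x, rfl⟩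
  have hcont := continuous_of_abs_sub_le hlip
  exact norm_inv_integral_smul_integral_le (f := fun x => x)
    (integrable_exp_neg_mul hcont hc hα.le) (fun x => (exp_pos _).le) (by positivity)
    (exp_pos _) (exp_le_integral_exp_neg_mul hcont hc hα.le hup h2)
    (exp_neg_mul_mul_norm_le hα hCl hlow hR hMR hR2)

lemma sq_norm_Xalpha_le (hα : 0 < α) (hCu : 0 ≤ Cu) (hCl : 0 < Cl)
    (hF : AssumptionA F L Cu Cl M) (h2 : Integrable (fun x => ‖x‖ ^ 2) μ) :
    ‖Xalpha α F μ‖ ^ 2 ≤ 2 * M ^ 2 + 4 * (Cu / Cl) + 2 * (1 + 2 / (α * Cl)) ^ 2 +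
      4 * (Cu / Cl) * ∫ x, ‖x‖ ^ 2 ∂μ := by
  set m := ∫ x, ‖x‖ ^ 2 ∂μ
  have hm : 0 ≤ m := integral_nonneg fun x => by positivity
  set R2 := max (M ^ 2) (2 * (Cu / Cl) * (1 + m))
  have hR2 : 0 ≤ R2 := le_max_of_le_left (sq_nonneg M)
  have hMR : M ≤ √R2 := (le_abs_self M).trans (abs_le_sqrt (le_max_left _ _))
  have hCuR : 2 * Cu * (1 + m) ≤ Cl * √R2 ^ 2 := by
    rw [sq_sqrt hR2, ← div_le_iff₀' hCl]
    exact (le_max_right _ _).trans_eq' (by ring)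
  have hX := norm_Xalpha_le hα hCl hF h2 (sqrt_nonneg R2) hMR hCuR
  have hR2le : R2 ≤ M ^ 2 + 2 * (Cu / Cl) * (1 + m) :=
    max_le (by nlinarith [div_nonneg hCu hCl.le]) (by nlinarith [sq_nonneg M])
  nlinarith [pow_le_pow_left₀ (norm_nonneg _) hX 2, sq_sqrt hR2,
    sq_nonneg (√R2 - (1 + 2 / (α * Cl)))]

end Xalpha

theorem Xalpha_fourth_moment_bound_general (d : ℕ) (α M Cu Cl : ℝ)
    (hα : 0 < α) (hCu : 0 < Cu) (hCl : 0 < Cl) :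
    ∃ c₁ c₂ : ℝ, 0 < c₁ ∧ 0 < c₂ ∧
      ∀ (L : ℝ) (F : EuclideanSpace ℝ (Fin d) → ℝ), 0 < L → AssumptionA F L Cu Cl M →
        ∀ (μ : Measure (EuclideanSpace ℝ (Fin d))), IsProbabilityMeasure μ →
          Integrable (fun x => ‖x‖ ^ 4) μ →
          (∫ x, ‖Xalpha α F μ - x‖ ^ 4 ∂μ) ≤ c₁ + c₂ * ∫ x, ‖x‖ ^ 4 ∂μ := by
  set b₁ := 2 * M ^ 2 + 4 * (Cu / Cl) + 2 * (1 + 2 / (α * Cl)) ^ 2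
  set b₂ := 4 * (Cu / Cl)
  refine ⟨16 * b₁ ^ 2, 16 * b₂ ^ 2 + 8, by positivity, by positivity, ?_⟩
  intro L F _ hF μ _ h4
  have h2 : Integrable (fun x => ‖x‖ ^ 2) μ :=
    integrable_norm_pow_of_le aestronglyMeasurable_id (by norm_num) h4
  have hX2 := sq_norm_Xalpha_le hα hCu.le hCl hF h2
  have hmoment : (∫ x, ‖x‖ ^ 2 ∂μ) ^ 2 ≤ ∫ x, ‖x‖ ^ 4 ∂μ := by
    simpa only [← pow_mul] using sq_integral_le_integral_sq h2 (by simpa only [← pow_mul] using h4)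
  have hX4 : ‖Xalpha α F μ‖ ^ 4 ≤ 2 * b₁ ^ 2 + 2 * b₂ ^ 2 * ∫ x, ‖x‖ ^ 4 ∂μ := by
    nlinarith [pow_le_pow_left₀ (sq_nonneg _) hX2 2, sq_nonneg (b₁ - b₂ * ∫ x, ‖x‖ ^ 2 ∂μ),
      mul_le_mul_of_nonneg_left hmoment (sq_nonneg b₂)]
  linarith [integral_norm_sub_pow_four_le h4 (Xalpha α F μ)]

/-- Fourth-moment bound: there exist constants `c₁, c₂ > 0`, depending only on
`α, M, Cu, Cl`, such that for every `F` satisfying Assumption (A) and every Borel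
probability measure `μ` with finite fourth moment,
`∫ |X^α(μ) − x|⁴ dμ ≤ c₁ + c₂ ∫ |x|⁴ dμ`. -/
theorem Xalpha_fourth_moment_bound (d : ℕ) (α M Cu Cl : ℝ)
    (hα : 0 < α) (hM : 0 < M) (hCu : 0 < Cu) (hCl : 0 < Cl) :
    ∃ c₁ c₂ : ℝ, 0 < c₁ ∧ 0 < c₂ ∧
      ∀ (L : ℝ) (F : EuclideanSpace ℝ (Fin d) → ℝ), 0 < L → AssumptionA F L Cu Cl M →
        ∀ (μ : Measure (EuclideanSpace ℝ (Fin d))), IsProbabilityMeasure μ →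
          Integrable (fun x => ‖x‖ ^ 4) μ →
          (∫ x, ‖Xalpha α F μ - x‖ ^ 4 ∂μ) ≤ c₁ + c₂ * ∫ x, ‖x‖ ^ 4 ∂μ :=
  Xalpha_fourth_moment_bound_general d α M Cu Cl hα hCu hCl
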